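/- Let V be a multiplicative unitary of multiplicity 1 on a finite-dimensional Hilbert space H, and let ψ be a state on L(H). Then the set G of eigenvalues of modulus 1 of L(ψ) = (ψ⊗id)(V) is a subgroup of the circle group U(1); in particular every eigenvalue of modulus 1 of L(ψ) is a root of unity. -/

import Mathlib

open scoped InnerProductSpace ComplexOrder

noncomputable section

namespace MU

variable {ι : Type*} [Fintype ι] [DecidableEq ι]

/-- The elementary tensor `f ⊗ g` of two vectors, in the model
`H ⊗ H = EuclideanSpace ℂ (ι × ι)`. -/
def tens (f g : EuclideanSpace ℂ ι) : EuclideanSpace ℂ (ι × ι) :=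
  WithLp.toLp 2 (fun p => f p.1 * g p.2)

/-- `g ↦ f ⊗ g` as a linear map. -/
def tensL (f : EuclideanSpace ℂ ι) :
    EuclideanSpace ℂ ι →ₗ[ℂ] EuclideanSpace ℂ (ι × ι) where
  toFun g := tens f g
  map_add' x y := by
    ext p; simp [tens]; ring
  map_smul' c x := by
    ext p; simp [tens]; ring

/-- `f ↦ f ⊗ g` as a linear map. -/
def tensR (g : EuclideanSpace ℂ ι) :
    EuclideanSpace ℂ ι →ₗ[ℂ] EuclideanSpace ℂ (ι × ι) where
  toFun f := tens f g
  map_add' x y := by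
    ext p; simp [tens]; ring
  map_smul' c x := by
    ext p; simp [tens]; ring

/-- Action of a matrix on a Euclidean space vector. -/
def appM {κ : Type*} [Fintype κ] (M : Matrix κ κ ℂ) (v : EuclideanSpace ℂ κ) :
    EuclideanSpace ℂ κ :=
  WithLp.toLp 2 (fun i => ∑ j, M i j * v j)

/-- Action of a matrix as a linear map on the Euclidean space. -/
def mact {κ : Type*} [Fintype κ] (M : Matrix κ κ ℂ) :
    EuclideanSpace ℂ κ →ₗ[ℂ] EuclideanSpace ℂ κ where
  toFun := appM M
  map_add' x y := by
    ext i; simp [appM, mul_add, Finset.sum_add_distrib]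
  map_smul' c x := by
    ext i; simp [appM, Finset.mul_sum]
    exact Finset.sum_congr rfl fun j _ => by ring

/-- The leg `V₁₂` on `H ⊗ H ⊗ H`. -/
def leg12 (V : Matrix (ι × ι) (ι × ι) ℂ) : Matrix (ι × ι × ι) (ι × ι × ι) ℂ :=
  fun p q => V (p.1, p.2.1) (q.1, q.2.1) * (if p.2.2 = q.2.2 then 1 else 0)

/-- The leg `V₁₃` on `H ⊗ H ⊗ H`. -/
def leg13 (V : Matrix (ι × ι) (ι × ι) ℂ) : Matrix (ι × ι × ι) (ι × ι × ι) ℂ :=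
  fun p q => V (p.1, p.2.2) (q.1, q.2.2) * (if p.2.1 = q.2.1 then 1 else 0)

/-- The leg `V₂₃` on `H ⊗ H ⊗ H`. -/
def leg23 (V : Matrix (ι × ι) (ι × ι) ℂ) : Matrix (ι × ι × ι) (ι × ι × ι) ℂ :=
  fun p q => V (p.2.1, p.2.2) (q.2.1, q.2.2) * (if p.1 = q.1 then 1 else 0)

/-- The pentagon equation `V₁₂ V₁₃ V₂₃ = V₂₃ V₁₂`. -/
def Pentagon (V : Matrix (ι × ι) (ι × ι) ℂ) : Prop :=
  leg12 V * leg13 V * leg23 V = leg23 V * leg12 V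

/-- `V` is a multiplicative unitary: a unitary satisfying the pentagon equation. -/
def IsMU (V : Matrix (ι × ι) (ι × ι) ℂ) : Prop :=
  V * V.conjTranspose = 1 ∧ V.conjTranspose * V = 1 ∧ Pentagon V

/-- `ξ` is a fixed vector for `V`. -/
def Fixed (V : Matrix (ι × ι) (ι × ι) ℂ) (ξ : EuclideanSpace ℂ ι) : Prop :=
  ∀ η, mact V (tens ξ η) = tens ξ η

/-- `ξ` is a cofixed vector for `V`. -/
def Cofixed (V : Matrix (ι × ι) (ι × ι) ℂ) (ξ : EuclideanSpace ℂ ι) : Prop :=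
  ∀ η, mact V (tens η ξ) = tens η ξ

/-- `V` has multiplicity 1, with fixed unit vector `e` and cofixed unit vector `eHat`. -/
def Mult1 (V : Matrix (ι × ι) (ι × ι) ℂ) (e eHat : EuclideanSpace ℂ ι) : Prop :=
  ‖e‖ = 1 ∧ ‖eHat‖ = 1 ∧ Fixed V e ∧ Cofixed V eHat ∧
    (∀ ξ, Fixed V ξ → ∃ c : ℂ, ξ = c • e) ∧
    (∀ ξ, Cofixed V ξ → ∃ c : ℂ, ξ = c • eHat)

/-- A pre-subgroup of `V` (with fixed vector `e`): a unit vector `f` with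
`⟨f,e⟩ > 0` and `V(f⊗f) = f⊗f`. -/
def IsPreSubgroup (V : Matrix (ι × ι) (ι × ι) ℂ) (e f : EuclideanSpace ℂ ι) : Prop :=
  ‖f‖ = 1 ∧ 0 < ⟪f, e⟫_ℂ ∧ mact V (tens f f) = tens f f

/-- The subspace `H^f = {η : V(f⊗η) = f⊗η}`. -/
def subUp (V : Matrix (ι × ι) (ι × ι) ℂ) (f : EuclideanSpace ℂ ι) :
    Submodule ℂ (EuclideanSpace ℂ ι) :=
  LinearMap.ker ((mact V).comp (tensL f) - tensL f)

/-- The subspace `H_f = {η : V(η⊗f) = η⊗f}`. -/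
def subDown (V : Matrix (ι × ι) (ι × ι) ℂ) (f : EuclideanSpace ℂ ι) :
    Submodule ℂ (EuclideanSpace ℂ ι) :=
  LinearMap.ker ((mact V).comp (tensR f) - tensR f)

/-- The slice `L(ω_{ξ,η}) = (ω_{ξ,η} ⊗ id)(V)`. -/
def Lslice (V : Matrix (ι × ι) (ι × ι) ℂ) (ξ η : EuclideanSpace ℂ ι) : Matrix ι ι ℂ :=
  fun a b => ∑ x, ∑ y, (starRingEnd ℂ) (ξ x) * η y * V (x, a) (y, b)

/-- The slice `ρ(ω_{ξ,η}) = (id ⊗ ω_{ξ,η})(V)`. -/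
def Rslice (V : Matrix (ι × ι) (ι × ι) ℂ) (ξ η : EuclideanSpace ℂ ι) : Matrix ι ι ℂ :=
  fun a b => ∑ x, ∑ y, (starRingEnd ℂ) (ξ x) * η y * V (a, x) (b, y)

/-- The slice `L(ω) = (ω ⊗ id)(V)` of a general linear functional `ω` on `L(H)`. -/
def LslF (V : Matrix (ι × ι) (ι × ι) ℂ) (ω : Matrix ι ι ℂ →ₗ[ℂ] ℂ) : Matrix ι ι ℂ :=
  fun a b => ω (fun x y => V (x, a) (y, b))

/-- A state on `L(H)`: a unital positive linear functional. -/
def IsState (ω : Matrix ι ι ℂ →ₗ[ℂ] ℂ) : Prop :=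
  ω 1 = 1 ∧ ∀ M : Matrix ι ι ℂ, M.PosSemidef → ∃ r : ℝ, 0 ≤ r ∧ ω M = r

/-! Diagonalising its density matrix writes `ψ = ∑ pᵢ ω_{uᵢ}` as a convex combination of vector
states. For a unit vector `ξ`, `⟪ξ, L(ψ) ξ⟫ = ∑ pᵢ ⟪uᵢ ⊗ ξ, V (uᵢ ⊗ ξ)⟫` is a convex combination of
points of the closed unit disc; so `L(ψ) ξ = c ξ` with `‖c‖ = 1` forces each point with `pᵢ ≠ 0` to
be `c`, and equality in Cauchy–Schwarz gives `V (uᵢ ⊗ ξ) = c (uᵢ ⊗ ξ)`. Hence the modulus-one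
eigenvalues of `L(ψ)` are the `c` with a common eigenvector `ξ ≠ 0` of all `V (uᵢ ⊗ ·)`. The
cofixed vector gives `c = 1`, and the pentagon equation turns common eigenvectors for `a` and `b`
into one for `a b`. A finite set of nonzero numbers closed under multiplication is a group of roots
of unity. -/

open scoped Matrix

section InnerProduct

variable {𝕜 E : Type*} [RCLike 𝕜] [NormedAddCommGroup E] [InnerProductSpace 𝕜 E]

lemma eq_of_re_inner_eq_one {x y : E} (hx : ‖x‖ = 1) (hy : ‖y‖ = 1)
    (h : RCLike.re ⟪x, y⟫_𝕜 = 1) : x = y := by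
  have hxy := @norm_sub_sq 𝕜 _ _ _ _ x y
  rw [hx, hy, h] at hxy
  exact sub_eq_zero.1 (norm_eq_zero.1 (pow_eq_zero_iff two_ne_zero |>.1 (by linarith)))

lemma eq_smul_of_sum_mul_inner_eq {κ : Type*} [Fintype κ] {p : κ → ℝ} {x y : κ → E} {c : 𝕜}
    (hp : ∀ i, 0 ≤ p i) (hp1 : ∑ i, p i = 1) (hx : ∀ i, ‖x i‖ = 1) (hy : ∀ i, ‖y i‖ = 1)
    (hc : ‖c‖ = 1) (h : ∑ i, (p i : 𝕜) * ⟪x i, y i⟫_𝕜 = c) (i : κ) (hi : p i ≠ 0) :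
    y i = c • x i := by
  have hcx : ∀ j, ‖c • x j‖ = 1 := fun j => by rw [norm_smul, hc, hx, one_mul]
  have hle : ∀ j ∈ Finset.univ, p j * RCLike.re ⟪c • x j, y j⟫_𝕜 ≤ p j * 1 := fun j _ =>
    mul_le_mul_of_nonneg_left ((re_inner_le_norm _ _).trans (by rw [hcx, hy, one_mul])) (hp j)
  have hsum : ∑ j, p j * RCLike.re ⟪c • x j, y j⟫_𝕜 = ∑ j, p j * 1 :=
    calc ∑ j, p j * RCLike.re ⟪c • x j, y j⟫_𝕜
        = RCLike.re (starRingEnd 𝕜 c * ∑ j, (p j : 𝕜) * ⟪x j, y j⟫_𝕜) := by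
          simp_rw [Finset.mul_sum, map_sum, inner_smul_left, ← RCLike.re_ofReal_mul, mul_left_comm]
      _ = ∑ j, p j * 1 := by
          rw [h, RCLike.conj_mul, ← RCLike.ofReal_pow, RCLike.ofReal_re, hc]
          simp [hp1]
  have hi' := (Finset.sum_eq_sum_iff_of_le hle).1 hsum i (Finset.mem_univ i)
  exact (eq_of_re_inner_eq_one (hcx i) (hy i) (mul_left_cancel₀ hi hi')).symm

end InnerProduct

section FiniteSubmonoid

variable {G₀ : Type*} [GroupWithZero G₀] {S : Submonoid G₀}

lemma _root_.Submonoid.isOfFinOrder_of_finite (hS : (S : Set G₀).Finite) {a : G₀} (ha : a ∈ S)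
    (ha0 : a ≠ 0) : IsOfFinOrder a := by
  obtain ⟨m, k, hmk, h⟩ := hS.exists_lt_map_eq_of_forall_mem (f := (a ^ ·)) (S.pow_mem ha)
  refine isOfFinOrder_iff_pow_eq_one.2 ⟨k - m, by omega, mul_left_cancel₀ (pow_ne_zero m ha0) ?_⟩
  rw [← pow_add, Nat.add_sub_cancel' hmk.le, mul_one]
  exact h.symm

lemma _root_.Submonoid.inv_mem_of_finite (hS : (S : Set G₀).Finite) {a : G₀} (ha : a ∈ S) :
    a⁻¹ ∈ S := by
  rcases eq_or_ne a 0 with rfl | ha0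
  · rwa [_root_.inv_zero]
  obtain ⟨k, hk, hak⟩ := isOfFinOrder_iff_pow_eq_one.1 (S.isOfFinOrder_of_finite hS ha ha0)
  rw [inv_eq_of_mul_eq_one_right ((mul_pow_sub_one hk.ne' a).trans hak)]
  exact S.pow_mem ha _

end FiniteSubmonoid

lemma mact_apply {κ : Type*} [Fintype κ] (M : Matrix κ κ ℂ) (v : EuclideanSpace ℂ κ) (i : κ) :
    mact M v i = ∑ j, M i j * v j := rfl

section MatrixAction

variable {κ : Type*} [Fintype κ] [DecidableEq κ]

lemma mact_eq_toEuclideanLin (M : Matrix κ κ ℂ) : mact M = M.toEuclideanLin := rfl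

lemma mact_mul (M N : Matrix κ κ ℂ) (v : EuclideanSpace ℂ κ) :
    mact (M * N) v = mact M (mact N v) := by
  simp [mact_eq_toEuclideanLin]

lemma mact_one (v : EuclideanSpace ℂ κ) : mact (1 : Matrix κ κ ℂ) v = v := by
  simp [mact_eq_toEuclideanLin]

lemma mact_injective {M : Matrix κ κ ℂ} (hM : Mᴴ * M = 1) : Function.Injective (mact M) :=
  Function.LeftInverse.injective (g := mact Mᴴ) fun v => by rw [← mact_mul, hM, mact_one]

lemma inner_mact_left (M : Matrix κ κ ℂ) (v w : EuclideanSpace ℂ κ) :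
    ⟪mact M v, w⟫_ℂ = ⟪v, mact Mᴴ w⟫_ℂ := by
  rw [mact_eq_toEuclideanLin, mact_eq_toEuclideanLin,
    Matrix.toEuclideanLin_conjTranspose_eq_adjoint, LinearMap.adjoint_inner_right]

lemma norm_mact {M : Matrix κ κ ℂ} (hM : Mᴴ * M = 1) (v : EuclideanSpace ℂ κ) :
    ‖mact M v‖ = ‖v‖ := by
  rw [@norm_eq_sqrt_re_inner ℂ, @norm_eq_sqrt_re_inner ℂ, inner_mact_left, ← mact_mul, hM,
    mact_one]

lemma trace_eq_trace_mact (M : Matrix κ κ ℂ) : M.trace = LinearMap.trace ℂ _ (mact M) := by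
  rw [LinearMap.trace_eq_matrix_trace ℂ (EuclideanSpace.basisFun κ ℂ).toBasis,
    mact_eq_toEuclideanLin, Matrix.toEuclideanLin_eq_toLin_orthonormal, LinearMap.toMatrix_toLin]

end MatrixAction

section State

variable {n : Type*} [Fintype n] [DecidableEq n]

def densityMatrix (ψ : Matrix n n ℂ →ₗ[ℂ] ℂ) : Matrix n n ℂ :=
  Matrix.of fun l k => ψ (Matrix.single k l 1)

lemma apply_eq_trace_mul_densityMatrix (ψ : Matrix n n ℂ →ₗ[ℂ] ℂ) (M : Matrix n n ℂ) :
    ψ M = (M * densityMatrix ψ).trace := by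
  conv_lhs => rw [M.matrix_eq_sum_single]
  simp only [map_sum, Matrix.trace, Matrix.diag, Matrix.mul_apply, densityMatrix,
    Matrix.of_apply]
  refine Finset.sum_congr rfl fun k _ => Finset.sum_congr rfl fun l _ => ?_
  rw [← smul_eq_mul, ← map_smul, Matrix.smul_single, smul_eq_mul, mul_one]

lemma inner_mact_densityMatrix (ψ : Matrix n n ℂ →ₗ[ℂ] ℂ) (v : EuclideanSpace ℂ n) :
    ⟪v, mact (densityMatrix ψ) v⟫_ℂ =
      ψ (Matrix.vecMulVec (WithLp.ofLp v) (star (WithLp.ofLp v))) := by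
  rw [apply_eq_trace_mul_densityMatrix]
  simp [Matrix.trace, Matrix.mul_apply, Matrix.vecMulVec_apply, PiLp.inner_apply, mact_apply,
    Finset.sum_mul]
  rw [Finset.sum_comm]
  exact Finset.sum_congr rfl fun i _ => Finset.sum_congr rfl fun j _ => by ring

lemma IsState.posSemidef_densityMatrix {ψ : Matrix n n ℂ →ₗ[ℂ] ℂ} (hψ : IsState ψ) :
    (densityMatrix ψ).PosSemidef := by
  rw [← Matrix.isPositive_toEuclideanLin_iff, LinearMap.isPositive_iff_complex]
  intro v
  obtain ⟨r, hr, hrv⟩ := hψ.2 _ (Matrix.posSemidef_vecMulVec_self_star (WithLp.ofLp v))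
  rw [← inner_conj_symm, ← mact_eq_toEuclideanLin, inner_mact_densityMatrix]
  simp [hrv, hr]

theorem IsState.exists_eq_sum_inner {ψ : Matrix n n ℂ →ₗ[ℂ] ℂ} (hψ : IsState ψ) :
    ∃ (p : n → ℝ) (u : n → EuclideanSpace ℂ n), (∀ i, 0 ≤ p i) ∧ ∑ i, p i = 1 ∧
      (∀ i, ‖u i‖ = 1) ∧ ∀ M, ψ M = ∑ i, (p i : ℂ) * ⟪u i, mact M (u i)⟫_ℂ := by
  have hρ := hψ.posSemidef_densityMatrix
  set b := hρ.1.eigenvectorBasis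
  have hb : ∀ i, mact (densityMatrix ψ) (b i) = (hρ.1.eigenvalues i : ℂ) • b i := fun i =>
    congrArg (WithLp.toLp 2) (hρ.1.mulVec_eigenvectorBasis i)
  have hψb : ∀ M, ψ M = ∑ i, (hρ.1.eigenvalues i : ℂ) * ⟪b i, mact M (b i)⟫_ℂ := fun M => by
    rw [apply_eq_trace_mul_densityMatrix, trace_eq_trace_mact, LinearMap.trace_eq_sum_inner _ b]
    simp only [mact_mul, hb, map_smul, inner_smul_right]
  refine ⟨_, b, hρ.eigenvalues_nonneg, ?_, b.orthonormal.1, hψb⟩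
  have h1 := hψ.1
  simp [hψb, mact_one, inner_self_eq_norm_sq_to_K, b.orthonormal.1] at h1
  exact_mod_cast h1

end State

section Tensor

variable {n : Type*} [Fintype n]

lemma inner_tens (f g f' g' : EuclideanSpace ℂ n) :
    ⟪tens f g, tens f' g'⟫_ℂ = ⟪f, f'⟫_ℂ * ⟪g, g'⟫_ℂ := by
  simp only [PiLp.inner_apply, tens, RCLike.inner_apply, map_mul, Fintype.sum_prod_type,
    Finset.sum_mul_sum]
  exact Finset.sum_congr rfl fun i _ => Finset.sum_congr rfl fun j _ => by ring

lemma norm_tens (f g : EuclideanSpace ℂ n) : ‖tens f g‖ = ‖f‖ * ‖g‖ := by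
  have h := inner_tens f g f g
  simp only [inner_self_eq_norm_sq_to_K] at h
  exact (sq_eq_sq₀ (norm_nonneg _) (by positivity)).1 (by rw [mul_pow]; exact_mod_cast h)

lemma tens_ne_zero {f g : EuclideanSpace ℂ n} (hf : f ≠ 0) (hg : g ≠ 0) : tens f g ≠ 0 := by
  rw [← norm_ne_zero_iff, norm_tens]
  exact mul_ne_zero (norm_ne_zero_iff.2 hf) (norm_ne_zero_iff.2 hg)

lemma inner_mact_Lslice (V : Matrix (n × n) (n × n) ℂ) (ξ ξ' η ζ : EuclideanSpace ℂ n) :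
    ⟪η, mact (Lslice V ξ ξ') ζ⟫_ℂ = ⟪tens ξ η, mact V (tens ξ' ζ)⟫_ℂ := by
  simp only [PiLp.inner_apply, RCLike.inner_apply, mact, appM, Lslice, tens, LinearMap.coe_mk,
    AddHom.coe_mk, map_mul, Fintype.sum_prod_type, Finset.sum_mul]
  conv_rhs => rw [Finset.sum_comm]
  refine Finset.sum_congr rfl fun a _ => ?_
  rw [Finset.sum_comm]
  refine Finset.sum_congr rfl fun x _ => ?_
  rw [Finset.sum_comm]
  exact Finset.sum_congr rfl fun y _ => Finset.sum_congr rfl fun b _ => by ring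

end Tensor

section EigenvaluesOfSlice

variable {n : Type*} [Fintype n] {V : Matrix (n × n) (n × n) ℂ} {ψ : Matrix n n ℂ →ₗ[ℂ] ℂ}
  {κ : Type*} [Fintype κ] {p : κ → ℝ} {u : κ → EuclideanSpace ℂ n}

lemma LslF_eq_sum_smul_Lslice (hψ : ∀ M, ψ M = ∑ i, (p i : ℂ) * ⟪u i, mact M (u i)⟫_ℂ) :
    LslF V ψ = ∑ i, (p i : ℂ) • Lslice V (u i) (u i) := by
  ext a b
  refine (hψ _).trans ?_
  simp only [Lslice, Matrix.sum_apply, Matrix.smul_apply, smul_eq_mul, PiLp.inner_apply,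
    RCLike.inner_apply, mact, appM, LinearMap.coe_mk, AddHom.coe_mk, Finset.mul_sum, Finset.sum_mul]
  exact Finset.sum_congr rfl fun i _ => Finset.sum_congr rfl fun x _ =>
    Finset.sum_congr rfl fun y _ => by ring

lemma inner_mact_LslF (hψ : ∀ M, ψ M = ∑ i, (p i : ℂ) * ⟪u i, mact M (u i)⟫_ℂ)
    (η ζ : EuclideanSpace ℂ n) :
    ⟪η, mact (LslF V ψ) ζ⟫_ℂ = ∑ i, (p i : ℂ) * ⟪tens (u i) η, mact V (tens (u i) ζ)⟫_ℂ := by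
  classical
  rw [LslF_eq_sum_smul_Lslice hψ, mact_eq_toEuclideanLin, map_sum, LinearMap.sum_apply, inner_sum]
  simp only [map_smul, LinearMap.smul_apply, inner_smul_right, ← mact_eq_toEuclideanLin,
    inner_mact_Lslice]

lemma mact_LslF_eq_smul_of_forall (hψ : ∀ M, ψ M = ∑ i, (p i : ℂ) * ⟪u i, mact M (u i)⟫_ℂ)
    (hp1 : ∑ i, p i = 1) (hu : ∀ i, ‖u i‖ = 1) {c : ℂ} {ξ : EuclideanSpace ℂ n}
    (h : ∀ i, p i ≠ 0 → mact V (tens (u i) ξ) = c • tens (u i) ξ) :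
    mact (LslF V ψ) ξ = c • ξ := by
  refine ext_inner_left ℂ fun η => ?_
  have hterm : ∀ i, (p i : ℂ) * ⟪tens (u i) η, mact V (tens (u i) ξ)⟫_ℂ =
      (p i : ℂ) * (c * ⟪η, ξ⟫_ℂ) := fun i => by
    rcases eq_or_ne (p i) 0 with hi | hi
    · simp [hi]
    · rw [h i hi, inner_smul_right, inner_tens, inner_self_eq_norm_sq_to_K, hu i]
      simp
  rw [inner_mact_LslF hψ, inner_smul_right, Finset.sum_congr rfl fun i _ => hterm i,
    ← Finset.sum_mul, ← Complex.ofReal_sum, hp1, Complex.ofReal_one, one_mul]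

variable [DecidableEq n]

lemma mact_tens_eq_smul_of_mact_LslF_eq_smul (hV : Vᴴ * V = 1)
    (hψ : ∀ M, ψ M = ∑ i, (p i : ℂ) * ⟪u i, mact M (u i)⟫_ℂ) (hp : ∀ i, 0 ≤ p i)
    (hp1 : ∑ i, p i = 1) (hu : ∀ i, ‖u i‖ = 1) {c : ℂ} (hc : ‖c‖ = 1)
    {ξ : EuclideanSpace ℂ n} (hξ : ‖ξ‖ = 1) (h : mact (LslF V ψ) ξ = c • ξ) (i : κ)
    (hi : p i ≠ 0) : mact V (tens (u i) ξ) = c • tens (u i) ξ := by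
  have hnorm : ∀ j, ‖tens (u j) ξ‖ = 1 := fun j => by rw [norm_tens, hu, hξ, one_mul]
  refine eq_smul_of_sum_mul_inner_eq hp hp1 hnorm (fun j => (norm_mact hV _).trans (hnorm j)) hc
    ?_ i hi
  refine (inner_mact_LslF hψ ξ ξ).symm.trans ?_
  rw [h, inner_smul_right, inner_self_eq_norm_sq_to_K, hξ]
  simp

theorem hasEigenvalue_mact_LslF_iff (hV : Vᴴ * V = 1)
    (hψ : ∀ M, ψ M = ∑ i, (p i : ℂ) * ⟪u i, mact M (u i)⟫_ℂ) (hp : ∀ i, 0 ≤ p i)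
    (hp1 : ∑ i, p i = 1) (hu : ∀ i, ‖u i‖ = 1) {c : ℂ} (hc : ‖c‖ = 1) :
    Module.End.HasEigenvalue (mact (LslF V ψ)) c ↔
      ∃ ξ ≠ 0, ∀ i, p i ≠ 0 → mact V (tens (u i) ξ) = c • tens (u i) ξ := by
  constructor
  · intro h
    obtain ⟨v, hv, hv0⟩ := h.exists_hasEigenvector
    refine ⟨(‖v‖⁻¹ : ℂ) • v, smul_ne_zero (by simpa using hv0) hv0,
      mact_tens_eq_smul_of_mact_LslF_eq_smul hV hψ hp hp1 hu hc (norm_smul_inv_norm hv0) ?_⟩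
    rw [map_smul, Module.End.mem_eigenspace_iff.1 hv, smul_comm]
  · rintro ⟨ξ, hξ, h⟩
    exact Module.End.hasEigenvalue_of_hasEigenvector
      ⟨Module.End.mem_eigenspace_iff.2 (mact_LslF_eq_smul_of_forall hψ hp1 hu h), hξ⟩

end EigenvaluesOfSlice

section Pentagon

variable {n : Type*}

def sliceFirst (W : EuclideanSpace ℂ (n × n × n)) (x : n) : EuclideanSpace ℂ (n × n) :=
  WithLp.toLp 2 fun r => W (x, r)

def sliceSecond (W : EuclideanSpace ℂ (n × n × n)) (y : n) : EuclideanSpace ℂ (n × n) :=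
  WithLp.toLp 2 fun r => W (r.1, y, r.2)

def sliceThird (W : EuclideanSpace ℂ (n × n × n)) (z : n) : EuclideanSpace ℂ (n × n) :=
  WithLp.toLp 2 fun r => W (r.1, r.2, z)

lemma ext_sliceFirst {W W' : EuclideanSpace ℂ (n × n × n)}
    (h : ∀ x, sliceFirst W x = sliceFirst W' x) : W = W' := by
  ext p; exact congrArg (· p.2) (h p.1)

lemma ext_sliceSecond {W W' : EuclideanSpace ℂ (n × n × n)}
    (h : ∀ y, sliceSecond W y = sliceSecond W' y) : W = W' := by
  ext p; exact congrArg (· (p.1, p.2.2)) (h p.2.1)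

lemma ext_sliceThird {W W' : EuclideanSpace ℂ (n × n × n)}
    (h : ∀ z, sliceThird W z = sliceThird W' z) : W = W' := by
  ext p; exact congrArg (· (p.1, p.2.1)) (h p.2.2)

lemma sliceSecond_smul (c : ℂ) (W : EuclideanSpace ℂ (n × n × n)) (y : n) :
    sliceSecond (c • W) y = c • sliceSecond W y := rfl

lemma sliceThird_smul (c : ℂ) (W : EuclideanSpace ℂ (n × n × n)) (z : n) :
    sliceThird (c • W) z = c • sliceThird W z := rfl

def rightSlice (R : EuclideanSpace ℂ (n × n)) (z : n) : EuclideanSpace ℂ n :=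
  WithLp.toLp 2 fun y => R (y, z)

lemma exists_rightSlice_ne_zero {R : EuclideanSpace ℂ (n × n)} (hR : R ≠ 0) :
    ∃ z, rightSlice R z ≠ 0 := by
  by_contra! h
  exact hR (by ext p; exact congrArg (· p.1) (h p.2))

section Legs

variable [Fintype n] [DecidableEq n] (M : Matrix (n × n) (n × n) ℂ)
  (W : EuclideanSpace ℂ (n × n × n))

lemma sliceFirst_mact_leg23 (x : n) :
    sliceFirst (mact (leg23 M) W) x = mact M (sliceFirst W x) := by
  ext r
  simp [sliceFirst, mact_apply, leg23, Fintype.sum_prod_type, Finset.sum_ite_eq]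

lemma sliceSecond_mact_leg13 (y : n) :
    sliceSecond (mact (leg13 M) W) y = mact M (sliceSecond W y) := by
  ext r
  simp [sliceSecond, mact_apply, leg13, Fintype.sum_prod_type, Finset.sum_ite_eq]

lemma sliceThird_mact_leg12 (z : n) :
    sliceThird (mact (leg12 M) W) z = mact M (sliceThird W z) := by
  ext r
  simp [sliceThird, mact_apply, leg12, Fintype.sum_prod_type, Finset.sum_ite_eq]

variable {M} in
lemma mact_leg23_injective (hM : Function.Injective (mact M)) :
    Function.Injective (mact (leg23 M)) := fun W W' h =>
  ext_sliceFirst fun x => hM <| by rw [← sliceFirst_mact_leg23, h, sliceFirst_mact_leg23]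

end Legs

/-- With `V R = ξ ⊗ ξ'`, the leg `V₂₃` maps `w = u ⊗ R` to `w₀ = u ⊗ ξ ⊗ ξ'`, on which `V₁₃` and
`V₁₂` act by `b` and `a`; the pentagon equation then gives `V₁₂ w = a b w`, and slicing the last
leg of `R` gives the eigenvectors. -/
theorem mact_tens_rightSlice_eq_mul_smul [Fintype n] [DecidableEq n]
    {V : Matrix (n × n) (n × n) ℂ} (hV : V * Vᴴ = 1) (hV' : Vᴴ * V = 1) (hP : Pentagon V)
    {u ξ ξ' : EuclideanSpace ℂ n} {a b : ℂ}
    (ha : mact V (tens u ξ) = a • tens u ξ) (hb : mact V (tens u ξ') = b • tens u ξ') (z : n) :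
    mact V (tens u (rightSlice (mact Vᴴ (tens ξ ξ')) z)) =
      (a * b) • tens u (rightSlice (mact Vᴴ (tens ξ ξ')) z) := by
  set R := mact Vᴴ (tens ξ ξ')
  have hR : mact V R = tens ξ ξ' := by rw [← mact_mul, hV, mact_one]
  set w : EuclideanSpace ℂ (n × n × n) := WithLp.toLp 2 fun p => u p.1 * R p.2
  set w₀ : EuclideanSpace ℂ (n × n × n) := WithLp.toLp 2 fun p => u p.1 * ξ p.2.1 * ξ' p.2.2
  have hw₀₁ : ∀ x, sliceFirst w₀ x = u x • tens ξ ξ' := fun x => by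
    ext r; simp [sliceFirst, w₀, tens, mul_assoc]
  have hw₀₂ : ∀ y, sliceSecond w₀ y = ξ y • tens u ξ' := fun y => by
    ext r; simp [sliceSecond, w₀, tens]; ring
  have hw₀₃ : ∀ z, sliceThird w₀ z = ξ' z • tens u ξ := fun z => by
    ext r; simp [sliceThird, w₀, tens]; ring
  have h23 : mact (leg23 V) w = w₀ := ext_sliceFirst fun x => by
    rw [sliceFirst_mact_leg23, show sliceFirst w x = u x • R from rfl, map_smul, hR, hw₀₁]
  have h13 : mact (leg13 V) w₀ = b • w₀ := ext_sliceSecond fun y => by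
    rw [sliceSecond_mact_leg13, hw₀₂, map_smul, hb, smul_comm, sliceSecond_smul, hw₀₂]
  have h12 : mact (leg12 V) w₀ = a • w₀ := ext_sliceThird fun z => by
    rw [sliceThird_mact_leg12, hw₀₃, map_smul, ha, smul_comm, sliceThird_smul, hw₀₃]
  have hw : mact (leg12 V) w = (a * b) • w := by
    apply mact_leg23_injective (mact_injective hV')
    rw [← mact_mul, ← hP, mact_mul, mact_mul, h23, h13, map_smul, h12, map_smul, h23, smul_smul,
      mul_comm]
  have hz := congrArg (sliceThird · z) hw
  rw [sliceThird_mact_leg12] at hz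
  exact hz

end Pentagon

theorem eigenvalues_modulus_one_subgroup_general {ι : Type*} [Fintype ι] [DecidableEq ι]
    (V : Matrix (ι × ι) (ι × ι) ℂ) (hV : IsMU V)
    (e eHat : EuclideanSpace ℂ ι) (hm : Mult1 V e eHat)
    (ψ : Matrix ι ι ℂ →ₗ[ℂ] ℂ) (hψ : IsState ψ) :
    ((1 : ℂ) ∈ {c : ℂ | ‖c‖ = 1 ∧ Module.End.HasEigenvalue (mact (LslF V ψ)) c}) ∧
    (∀ a ∈ {c : ℂ | ‖c‖ = 1 ∧ Module.End.HasEigenvalue (mact (LslF V ψ)) c},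
      ∀ b ∈ {c : ℂ | ‖c‖ = 1 ∧ Module.End.HasEigenvalue (mact (LslF V ψ)) c},
        a * b ∈ {c : ℂ | ‖c‖ = 1 ∧ Module.End.HasEigenvalue (mact (LslF V ψ)) c}) ∧
    (∀ a ∈ {c : ℂ | ‖c‖ = 1 ∧ Module.End.HasEigenvalue (mact (LslF V ψ)) c},
        a⁻¹ ∈ {c : ℂ | ‖c‖ = 1 ∧ Module.End.HasEigenvalue (mact (LslF V ψ)) c}) ∧
    (∀ a ∈ {c : ℂ | ‖c‖ = 1 ∧ Module.End.HasEigenvalue (mact (LslF V ψ)) c},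
        ∃ k : ℕ, 0 < k ∧ a ^ k = 1) := by
  obtain ⟨hVV, hVV', hP⟩ := hV
  obtain ⟨-, heHat, -, hcofix, -, -⟩ := hm
  obtain ⟨p, u, hp, hp1, hu, hψu⟩ := hψ.exists_eq_sum_inner
  set G := {c : ℂ | ‖c‖ = 1 ∧ Module.End.HasEigenvalue (mact (LslF V ψ)) c}
  have hG : ∀ c, c ∈ G ↔
      ‖c‖ = 1 ∧ ∃ ξ ≠ 0, ∀ i, p i ≠ 0 → mact V (tens (u i) ξ) = c • tens (u i) ξ := fun c =>
    and_congr_right fun hc => hasEigenvalue_mact_LslF_iff hVV' hψu hp hp1 hu hc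
  have hG_one : 1 ∈ G := (hG 1).2 ⟨norm_one, eHat, norm_ne_zero_iff.1 (by simp [heHat]),
    fun i _ => by rw [one_smul]; exact hcofix (u i)⟩
  have hG_mul : ∀ a ∈ G, ∀ b ∈ G, a * b ∈ G := by
    intro a ha b hb
    obtain ⟨ha1, ξ, hξ, hξa⟩ := (hG a).1 ha
    obtain ⟨hb1, ξ', hξ', hξ'b⟩ := (hG b).1 hb
    have hR : mact Vᴴ (tens ξ ξ') ≠ 0 := fun h0 =>
      tens_ne_zero hξ hξ' (by rw [← mact_one (tens ξ ξ'), ← hVV, mact_mul, h0, map_zero])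
    obtain ⟨z, hz⟩ := exists_rightSlice_ne_zero hR
    exact (hG _).2 ⟨by rw [norm_mul, ha1, hb1, one_mul], _, hz, fun i hi =>
      mact_tens_rightSlice_eq_mul_smul hVV hVV' hP (hξa i hi) (hξ'b i hi) z⟩
  let S : Submonoid ℂ :=
    { carrier := G, mul_mem' := fun ha hb => hG_mul _ ha _ hb, one_mem' := hG_one }
  have hS : (S : Set ℂ).Finite :=
    (Module.End.finite_hasEigenvalue (mact (LslF V ψ))).subset fun c (hc : c ∈ G) => hc.2
  refine ⟨hG_one, hG_mul, fun a ha => S.inv_mem_of_finite hS (a := a) ha, fun a ha => ?_⟩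
  exact isOfFinOrder_iff_pow_eq_one.1
    (S.isOfFinOrder_of_finite hS (a := a) ha (norm_ne_zero_iff.1 (by simp [ha.1])))

/-- the modulus-one eigenvalues of `L(ψ)` form a subgroup of the
circle; in particular they are roots of unity. -/
theorem eigenvalues_modulus_one_subgroup {ι : Type*} [Fintype ι] [DecidableEq ι] [Nonempty ι]
    (V : Matrix (ι × ι) (ι × ι) ℂ) (hV : IsMU V)
    (e eHat : EuclideanSpace ℂ ι) (hm : Mult1 V e eHat)
    (ψ : Matrix ι ι ℂ →ₗ[ℂ] ℂ) (hψ : IsState ψ) :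
    ((1 : ℂ) ∈ {c : ℂ | ‖c‖ = 1 ∧ Module.End.HasEigenvalue (mact (LslF V ψ)) c}) ∧
    (∀ a ∈ {c : ℂ | ‖c‖ = 1 ∧ Module.End.HasEigenvalue (mact (LslF V ψ)) c},
      ∀ b ∈ {c : ℂ | ‖c‖ = 1 ∧ Module.End.HasEigenvalue (mact (LslF V ψ)) c},
        a * b ∈ {c : ℂ | ‖c‖ = 1 ∧ Module.End.HasEigenvalue (mact (LslF V ψ)) c}) ∧
    (∀ a ∈ {c : ℂ | ‖c‖ = 1 ∧ Module.End.HasEigenvalue (mact (LslF V ψ)) c},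
        a⁻¹ ∈ {c : ℂ | ‖c‖ = 1 ∧ Module.End.HasEigenvalue (mact (LslF V ψ)) c}) ∧
    (∀ a ∈ {c : ℂ | ‖c‖ = 1 ∧ Module.End.HasEigenvalue (mact (LslF V ψ)) c},
        ∃ k : ℕ, 0 < k ∧ a ^ k = 1) :=
  eigenvalues_modulus_one_subgroup_general V hV e eHat hm ψ hψ

end MU
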